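/- arXiv:2002.08459 — 3 statements merged into one kernel-verified Lean document; each statement's English description precedes it below -/
import Mathlib

section
/- Let X : ℝ × ℝ^d → ℝ^d be C¹ (jointly), a one-parameter family of vector fields X_t = X(t, ·), and let φ : ℝ × ℝ × ℝ^d → ℝ^d be C² (jointly) with φ(t, 0, p) = p and ∂_s φ(t, s, p) = X(t, φ(t, s, p)) for all (t, s, p), so that for each t the map s ↦ φ(t, s, ·) is the flow of X_t. Write φ_s = φ(0, s, ·) for the flow of X₀, and X′(p) = ∂_t X(t, p)|_{t=0}. Then for every p ∈ ℝ^d, the derivative at t = 0 of the family of time-one maps pre-composed with φ_{−1} is given by ∂_t [φ(t, 1, φ_{−1}(p))]|_{t=0} = ∫₀¹ Dφ_{1−s}(φ_{s−1}(p)) (X′(φ_{s−1}(p))) ds, where Dφ_u(q) denotes the spatial derivative of φ_u at q. (Equivalently, the vector field tangent to the family of diffeomorphisms h_t = φ^{X_t}_1 ∘ φ_{−1} at t = 0 is ∫₀¹ (φ_s)_* X′ ds.) -/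
/-!
Put `q = φ₀(-1, p)` and compare the perturbed flow with the unperturbed one through
`G(t, s) = φ₀(1 - s, φ(t, s, q))`: `G(t, 0) = φ₀(1, q)` does not depend on `t`, while
`G(t, 1) = φ(t, 1, q)`. Uniqueness for the locally Lipschitz field `X₀` gives the group law of
`φ₀`, hence `Dφ₀_u X₀ = X₀ ∘ φ₀_u`, and so `∂ₛG(t, s) = Dφ₀_{1-s}(X_t - X₀)` at `φ(t, s, q)`.
This vanishes at `t = 0`, so `∂ₜ∂ₛG(0, s) = Dφ₀_{1-s}(X′)` at `φ₀(s, q) = φ₀(s - 1, p)`.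
Exchanging the mixed partials of the `C²` map `G` and integrating over `s ∈ [0, 1]` gives the
formula.
-/

open Set

variable {E F : Type*} [NormedAddCommGroup E] [NormedSpace ℝ E]
  [NormedAddCommGroup F] [NormedSpace ℝ F]

theorem HasDerivAt.comp_prodMk_of_partial {f : ℝ × E → F} {a : ℝ → ℝ} {b : ℝ → E}
    {a' : ℝ} {b' : E} {f₁ : F} {f₂ : E →L[ℝ] F} {s : ℝ} (hf : DifferentiableAt ℝ f (a s, b s))
    (hf₁ : HasDerivAt (fun u => f (u, b s)) f₁ (a s))
    (hf₂ : HasFDerivAt (fun x => f (a s, x)) f₂ (b s))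
    (ha : HasDerivAt a a' s) (hb : HasDerivAt b b' s) :
    HasDerivAt (fun s => f (a s, b s)) (a' • f₁ + f₂ b') s := by
  have h₁ : f₁ = fderiv ℝ f (a s, b s) (1, 0) :=
    hf₁.unique <| hf.hasFDerivAt.comp_hasDerivAt _
      ((hasDerivAt_id _).prodMk (hasDerivAt_const _ _))
  have h₂ : f₂ = (fderiv ℝ f (a s, b s)).comp (.inr ℝ ℝ E) :=
    hf₂.unique <| hf.hasFDerivAt.comp _ ((hasFDerivAt_const _ _).prodMk (hasFDerivAt_id _))
  have hsplit : ((a', b') : ℝ × E) = a' • ((1 : ℝ), (0 : E)) + (0, b') := by simp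
  have := hf.hasFDerivAt.comp_hasDerivAt s (ha.prodMk hb)
  rw [hsplit, map_add, map_smul, ← h₁] at this
  rw [h₂]
  exact this

theorem hasDerivAt_deriv_fst_of_contDiff {G : ℝ × ℝ → F} (hG : ContDiff ℝ 2 G) {g : ℝ → ℝ → F}
    (hg : ∀ t s, HasDerivAt (fun s => G (t, s)) (g t s) s) {t₀ s : ℝ} {a : F}
    (ha : HasDerivAt (fun t => g t s) a t₀) :
    HasDerivAt (fun s => deriv (fun t => G (t, s)) t₀) a s := by
  have hG₁ : Differentiable ℝ G := hG.differentiable (by norm_num)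
  have hG₂ : DifferentiableAt ℝ (fderiv ℝ G) (t₀, s) :=
    (hG.fderiv_right (m := 1) (by norm_num)).differentiable (by norm_num) _
  have hfst : ∀ s t : ℝ, HasDerivAt (fun t : ℝ => (t, s)) ((1 : ℝ), (0 : ℝ)) t := fun s t =>
    (hasDerivAt_id' t).prodMk (hasDerivAt_const t s)
  have hsnd : ∀ t s : ℝ, HasDerivAt (fun s : ℝ => (t, s)) ((0 : ℝ), (1 : ℝ)) s := fun t s =>
    (hasDerivAt_const s t).prodMk (hasDerivAt_id' s)
  have hmixed : HasDerivAt (fun t => g t s) (fderiv ℝ (fderiv ℝ G) (t₀, s) (1, 0) (0, 1)) t₀ := by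
    have hg' : ∀ t, g t s = fderiv ℝ G (t, s) (0, 1) := fun t =>
      (hg t s).unique <| (hG₁ _).hasFDerivAt.comp_hasDerivAt _ (hsnd t s)
    have h1 := hG₂.hasFDerivAt.comp_hasDerivAt t₀ (hfst s t₀)
    have h2 := h1.clm_apply (hasDerivAt_const t₀ ((0 : ℝ), (1 : ℝ)))
    simp_rw [hg']
    simpa using h2
  have hsymm : fderiv ℝ (fderiv ℝ G) (t₀, s) (0, 1) (1, 0)
      = fderiv ℝ (fderiv ℝ G) (t₀, s) (1, 0) (0, 1) :=
    hG.contDiffAt.isSymmSndFDerivAt (by simp) _ _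
  have hpartial : ∀ s, deriv (fun t => G (t, s)) t₀ = fderiv ℝ G (t₀, s) (1, 0) := fun s =>
    ((hG₁ _).hasFDerivAt.comp_hasDerivAt _ (hfst s t₀)).deriv
  simp_rw [hpartial]
  have h1 := hG₂.hasFDerivAt.comp_hasDerivAt s (hsnd t₀ s)
  have h2 := h1.clm_apply (hasDerivAt_const s ((1 : ℝ), (0 : ℝ)))
  simpa [hsymm, ha.unique hmixed] using h2

theorem ContDiff.contDiff_deriv_fst {G : ℝ × ℝ → F} (hG : ContDiff ℝ 2 G) (t₀ : ℝ) :
    ContDiff ℝ 1 (fun s => deriv (fun t => G (t, s)) t₀) := by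
  have : ContDiff ℝ 1 (fun s => fderiv ℝ (fun t => G (t, s)) t₀) :=
    (hG.comp (contDiff_snd.prodMk contDiff_fst)).fderiv contDiff_const (by norm_num)
  simpa only [← fderiv_apply_one_eq_deriv] using this.clm_apply contDiff_const

theorem hasDerivAt_sub_apply_of_contDiff {X : ℝ → E → F}
    (hX : ContDiff ℝ 1 (fun q : ℝ × E => X q.1 q.2)) {y : ℝ → E} {t₀ : ℝ} {y' : E}
    (hy : HasDerivAt y y' t₀) :
    HasDerivAt (fun t => X t (y t) - X t₀ (y t)) (deriv (fun τ => X τ (y t₀)) t₀) t₀ := by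
  have hXd : Differentiable ℝ (fun q : ℝ × E => X q.1 q.2 - X t₀ q.2) :=
    (hX.sub (hX.comp (contDiff_const.prodMk contDiff_snd))).differentiable (by norm_num)
  have h₁ : HasDerivAt (fun τ => X τ (y t₀) - X t₀ (y t₀)) (deriv (fun τ => X τ (y t₀)) t₀) t₀ :=
    ((hX.comp (contDiff_id.prodMk contDiff_const)).differentiable (by norm_num)
      t₀).hasDerivAt.sub_const _
  have h₂ : HasFDerivAt (fun x => X t₀ x - X t₀ x) (0 : E →L[ℝ] F) (y t₀) := by
    simpa only [sub_self] using hasFDerivAt_const (0 : F) (y t₀)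
  simpa using HasDerivAt.comp_prodMk_of_partial (f := fun q : ℝ × E => X q.1 q.2 - X t₀ q.2)
    (hXd _) h₁ h₂ (hasDerivAt_id' t₀) hy

theorem LocallyLipschitz.eq_of_hasDerivAt {v : E → E} (hv : LocallyLipschitz v) {f g : ℝ → E}
    (hf : ∀ t, HasDerivAt f (v (f t)) t) (hg : ∀ t, HasDerivAt g (v (g t)) t) {t₀ : ℝ}
    (h : f t₀ = g t₀) : f = g := by
  funext t
  set I := Icc (min t t₀ - 1) (max t t₀ + 1)
  have hI : IsCompact (f '' I ∪ g '' I) :=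
    (isCompact_Icc.image (continuous_iff_continuousAt.2 fun t => (hf t).continuousAt)).union
      (isCompact_Icc.image (continuous_iff_continuousAt.2 fun t => (hg t).continuousAt))
  obtain ⟨K, hK⟩ := hv.locallyLipschitzOn.exists_lipschitzOnWith_of_compact hI
  have hIoo : ∀ {s}, s ∈ Ioo (min t t₀ - 1) (max t t₀ + 1) → s ∈ I :=
    fun hs => Ioo_subset_Icc_self hs
  refine ODE_solution_unique_of_mem_Ioo (v := fun _ => v) (s := fun _ => f '' I ∪ g '' I)
    (fun _ _ => hK) ?_ (fun s hs => ⟨hf s, .inl ⟨s, hIoo hs, rfl⟩⟩)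
    (fun s hs => ⟨hg s, .inr ⟨s, hIoo hs, rfl⟩⟩) h ?_ <;>
  constructor <;>
    linarith [min_le_left t t₀, min_le_right t t₀, le_max_left t t₀, le_max_right t t₀]

structure IsFlow (v : E → E) (Φ : ℝ → E → E) : Prop where
  map_zero : ∀ x, Φ 0 x = x
  hasDerivAt : ∀ s x, HasDerivAt (Φ · x) (v (Φ s x)) s

namespace IsFlow

variable {v : E → E} {Φ : ℝ → E → E}

theorem map_add (h : IsFlow v Φ) (hv : LocallyLipschitz v) (u r : ℝ) (x : E) :
    Φ u (Φ r x) = Φ (u + r) x :=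
  congrFun (hv.eq_of_hasDerivAt (fun u => h.hasDerivAt u _)
    (fun u => (h.hasDerivAt (u + r) x).comp_add_const u r) (t₀ := 0) (by simp [h.map_zero])) u

theorem map_vectorField (h : IsFlow v Φ) (hv : LocallyLipschitz v) {u : ℝ} {x : E}
    {L : E →L[ℝ] E} (hL : HasFDerivAt (Φ u) L x) : L (v x) = v (Φ u x) := by
  have h₁ : HasDerivAt (fun r => Φ u (Φ r x)) (L (v x)) 0 := by
    have := h.hasDerivAt 0 x
    rw [h.map_zero] at this
    exact hL.comp_hasDerivAt_of_eq 0 this (h.map_zero x).symm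
  have h₂ : HasDerivAt (fun r => Φ u (Φ r x)) (v (Φ u x)) 0 := by
    simp_rw [h.map_add hv]
    simpa using (h.hasDerivAt (u + 0) x).comp_const_add u 0
  exact h₁.unique h₂

theorem hasDerivAt_apply_sub (h : IsFlow v Φ) (hv : LocallyLipschitz v) {T s : ℝ} {c : ℝ → E}
    {w : E} (hΦ : DifferentiableAt ℝ (Function.uncurry Φ) (T - s, c s)) (hc : HasDerivAt c w s) :
    HasDerivAt (fun s => Φ (T - s) (c s)) (fderiv ℝ (Φ (T - s)) (c s) (w - v (c s))) s := by
  have hx : DifferentiableAt ℝ (Φ (T - s)) (c s) :=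
    hΦ.comp (c s) ((differentiableAt_const _).prodMk differentiableAt_id)
  have := HasDerivAt.comp_prodMk_of_partial (f := Function.uncurry Φ) hΦ
    (h.hasDerivAt (T - s) (c s)) hx.hasFDerivAt ((hasDerivAt_id' s).const_sub T) hc
  rw [map_sub, h.map_vectorField hv hx.hasFDerivAt, sub_eq_neg_add, ← neg_one_smul ℝ (v _)]
  exact this

end IsFlow

theorem hasDerivAt_flow_param [CompleteSpace E] {X : ℝ → E → E}
    (hX : ContDiff ℝ 1 (fun q : ℝ × E => X q.1 q.2)) {φ : ℝ → ℝ → E → E}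
    (hφ : ContDiff ℝ 2 (fun q : ℝ × ℝ × E => φ q.1 q.2.1 q.2.2)) (hflow : ∀ t, IsFlow (X t) (φ t))
    (T : ℝ) (q : E) :
    HasDerivAt (fun t => φ t T q)
      (∫ s in (0 : ℝ)..T,
        fderiv ℝ (φ 0 (T - s)) (φ 0 s q) (deriv (fun τ => X τ (φ 0 s q)) 0)) 0 := by
  have hv : LocallyLipschitz (X 0) :=
    (hX.comp (contDiff_const.prodMk contDiff_id)).locallyLipschitz
  have hφ₀ : ContDiff ℝ 2 (Function.uncurry (φ 0)) := hφ.comp (contDiff_const.prodMk contDiff_id)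
  have hDφ₀ : ContDiff ℝ 1 (fun z : ℝ × E => fderiv ℝ (φ 0 z.1) z.2) :=
    (hφ₀.comp (contDiff_fst.comp contDiff_fst |>.prodMk contDiff_snd)).fderiv contDiff_snd
      (by norm_num)
  have hcurve : ∀ s, Differentiable ℝ (fun t => φ t s q) := fun s =>
    (hφ.comp (contDiff_id.prodMk (contDiff_const (c := (s, q))))).differentiable (by norm_num)
  set G : ℝ × ℝ → E := fun z => φ 0 (T - z.2) (φ z.1 z.2 q)
  have hG : ContDiff ℝ 2 G :=
    hφ₀.comp ((contDiff_const.sub contDiff_snd).prodMk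
      (hφ.comp (contDiff_fst.prodMk (contDiff_snd.prodMk contDiff_const))))
  have hG_snd : ∀ t s, HasDerivAt (fun s => G (t, s))
      (fderiv ℝ (φ 0 (T - s)) (φ t s q) (X t (φ t s q) - X 0 (φ t s q))) s := fun t s =>
    (hflow 0).hasDerivAt_apply_sub hv (hφ₀.differentiable (by norm_num) _)
      ((hflow t).hasDerivAt s q)
  have hG_snd_fst : ∀ s, HasDerivAt
      (fun t => fderiv ℝ (φ 0 (T - s)) (φ t s q) (X t (φ t s q) - X 0 (φ t s q)))
      (fderiv ℝ (φ 0 (T - s)) (φ 0 s q) (deriv (fun τ => X τ (φ 0 s q)) 0)) 0 := fun s => by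
    have hL : DifferentiableAt ℝ (fun t => fderiv ℝ (φ 0 (T - s)) (φ t s q)) 0 :=
      (hDφ₀.differentiable one_ne_zero _).comp 0
        ((differentiableAt_const _).prodMk (hcurve s 0))
    simpa using hL.hasDerivAt.clm_apply
      (hasDerivAt_sub_apply_of_contDiff hX (hcurve s 0).hasDerivAt)
  have hw : ∀ s, HasDerivAt (fun s => deriv (fun t => G (t, s)) 0)
      (fderiv ℝ (φ 0 (T - s)) (φ 0 s q) (deriv (fun τ => X τ (φ 0 s q)) 0)) s := fun s =>
    hasDerivAt_deriv_fst_of_contDiff hG hG_snd (hG_snd_fst s)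
  have hw_cont := (hG.contDiff_deriv_fst 0).continuous_deriv le_rfl
  rw [funext fun s => (hw s).deriv] at hw_cont
  rw [intervalIntegral.integral_eq_sub_of_hasDerivAt (fun s _ => hw s)
    (hw_cont.intervalIntegrable _ _)]
  have hG_zero : (fun t => G (t, 0)) = fun _ => φ 0 T q := by simp [G, (hflow _).map_zero]
  have hG_T : (fun t => G (t, T)) = fun t => φ t T q := by simp [G, (hflow 0).map_zero]
  rw [hG_zero, hG_T, deriv_const, sub_zero]
  exact (hcurve T 0).hasDerivAt

/-- For a `C¹` family of vector fields `X_t` with `C²` flows `φ^t`, the vector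
field tangent at `t = 0` to the family of diffeomorphisms `h_t = φ^{X_t}_1 ∘ φ_{−1}`
(where `φ = φ^{X₀}`) is `∫₀¹ (φ_s)_* X′ ds`, with `X′ = ∂_t X_t|₀`; pointwise,
`∂_t[φ(t,1,φ_{−1}(p))]|₀ = ∫₀¹ Dφ_{1−s}(φ_{s−1}(p)) (X′(φ_{s−1}(p))) ds`. -/
theorem stmt_17 {d : ℕ}
    (X : ℝ → (Fin d → ℝ) → Fin d → ℝ)
    (hX : ContDiff ℝ 1 (fun q : ℝ × (Fin d → ℝ) => X q.1 q.2))
    (φ : ℝ → ℝ → (Fin d → ℝ) → Fin d → ℝ)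
    (hφ : ContDiff ℝ 2 (fun q : ℝ × ℝ × (Fin d → ℝ) => φ q.1 q.2.1 q.2.2))
    (hφ0 : ∀ t p, φ t 0 p = p)
    (hflow : ∀ t s p, HasDerivAt (fun u => φ t u p) (X t (φ t s p)) s) :
    ∀ p, HasDerivAt (fun t => φ t 1 (φ 0 (-1) p))
      (∫ s in (0:ℝ)..1,
        fderiv ℝ (φ 0 (1 - s)) (φ 0 (s - 1) p)
          (deriv (fun τ => X τ (φ 0 (s - 1) p)) 0)) 0 := by
  intro p
  have hIsFlow : ∀ t, IsFlow (X t) (φ t) := fun t => ⟨hφ0 t, hflow t⟩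
  have hv : LocallyLipschitz (X 0) :=
    (hX.comp (contDiff_const.prodMk contDiff_id)).locallyLipschitz
  have hshift : ∀ s, φ 0 s (φ 0 (-1) p) = φ 0 (s - 1) p := fun s => by
    rw [(hIsFlow 0).map_add hv, sub_eq_add_neg]
  simpa only [hshift] using hasDerivAt_flow_param hX hφ hIsFlow 1 (φ 0 (-1) p)
end

section
/- Let α, β ∈ (0,1) with α + β < 1. Let X : ℝ^d → ℝ^d be a bounded continuous vector field, and let φ : ℝ × ℝ^d → ℝ^d be a global flow of X satisfying the group property φ(t + s, p) = φ(t, φ(s, p)). Let μ be a Borel probability measure on ℝ^d invariant under φ(t, ·) for every t. Let f : ℝ^d → ℝ be bounded and α-Hölder with constant C_f, and g : ℝ^d → ℝ be bounded and β-Hölder with constant C_g, and define h(t) = ∫ f(x)·g(φ(t, x)) dμ(x). Then there is a constant C depending only on α, β and sup_x ‖X(x)‖ such that |h(t) − h(s)| ≤ C · (sup|f| + C_f) · (sup|g| + C_g) · |t − s|^(α+β) for all t, s ∈ ℝ; in particular h is (α+β)-Hölder. -/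
open MeasureTheory

lemma holder_cont' {E : Type*} [PseudoMetricSpace E] {f : E → ℝ} {Cf a : ℝ}
    (ha : 0 < a) (h : ∀ x y, |f x - f y| ≤ Cf * dist x y ^ a) : Continuous f := by
  set C' : ℝ := max Cf 0 with hC'
  have h' : ∀ x y, |f x - f y| ≤ (C' + 1) * dist x y ^ a := by
    intro x y
    refine (h x y).trans (mul_le_mul_of_nonneg_right ?_ (Real.rpow_nonneg dist_nonneg a))
    have : Cf ≤ C' := le_max_left _ _
    linarith
  rw [Metric.continuous_iff]
  intro x ε hε
  have hC1 : (0:ℝ) < C' + 1 := by positivity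
  refine ⟨(ε / (C' + 1)) ^ (1/a), Real.rpow_pos_of_pos (by positivity) _, fun y hy => ?_⟩
  rw [Real.dist_eq]
  calc |f y - f x| ≤ (C' + 1) * dist y x ^ a := h' y x
    _ < (C' + 1) * (ε / (C' + 1)) := by
        refine mul_lt_mul_of_pos_left ?_ hC1
        calc dist y x ^ a < ((ε / (C' + 1)) ^ (1/a)) ^ a :=
              Real.rpow_lt_rpow dist_nonneg hy ha
          _ = ε / (C' + 1) := by
              rw [← Real.rpow_mul (by positivity), one_div, inv_mul_cancel₀ ha.ne', Real.rpow_one]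
    _ = ε := by field_simp

/-- Hölder regularity of averaged observables along a flow, case `α + β < 1`:
if `f` is `α`-Hölder, `g` is `β`-Hölder and `μ` is invariant under the flow `φ`
of a bounded vector field `X`, then `h(t) = ∫ f(x)·g(φ_t(x)) dμ` is
`(α+β)`-Hölder, with a constant depending only on `α`, `β` and `sup ‖X‖`. -/
theorem stmt_18 (α β : ℝ) (hα : α ∈ Set.Ioo (0:ℝ) 1) (hβ : β ∈ Set.Ioo (0:ℝ) 1)
    (hαβ : α + β < 1) (MX : ℝ) (hMX : 0 ≤ MX) :
    ∃ C : ℝ, 0 < C ∧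
      ∀ (d : ℕ) (X : (Fin d → ℝ) → Fin d → ℝ), Continuous X → (∀ x, ‖X x‖ ≤ MX) →
      ∀ φ : ℝ → (Fin d → ℝ) → Fin d → ℝ,
        (∀ p, φ 0 p = p) →
        (∀ t p, HasDerivAt (fun s : ℝ => φ s p) (X (φ t p)) t) →
        (∀ t s p, φ (t + s) p = φ t (φ s p)) →
      ∀ μ : Measure (Fin d → ℝ), IsProbabilityMeasure μ →
        (∀ t, Measure.map (φ t) μ = μ) →
      ∀ (f g : (Fin d → ℝ) → ℝ) (Mf Cf Mg Cg : ℝ), 0 ≤ Cf → 0 ≤ Cg →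
        (∀ x, |f x| ≤ Mf) → (∀ x y, |f x - f y| ≤ Cf * dist x y ^ α) →
        (∀ x, |g x| ≤ Mg) → (∀ x y, |g x - g y| ≤ Cg * dist x y ^ β) →
        ∀ t s : ℝ,
          |(∫ x, f x * g (φ t x) ∂μ) - ∫ x, f x * g (φ s x) ∂μ| ≤
            C * (Mf + Cf) * (Mg + Cg) * |t - s| ^ (α + β) := by
  obtain ⟨hα0, hα1⟩ := hα
  obtain ⟨hβ0, hβ1⟩ := hβ
  have hαβ0 : (0:ℝ) < α + β := by linarith
  set q : ℝ := (2:ℝ) ^ (α + β - 1) with hqdef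
  have hq0 : 0 < q := Real.rpow_pos_of_pos two_pos _
  have hq1 : q < 1 := Real.rpow_lt_one_of_one_lt_of_neg one_lt_two (by linarith)
  have h1q : (0:ℝ) < 1 - q := by linarith
  refine ⟨(MX + 1) ^ (α + β) / (2 * (1 - q)), by positivity, ?_⟩
  intro d X hXc hXb φ hφ0 hφd hφg μ hμp hμinv f g Mf Cf Mg Cg hCf hCg hMf hHf hMg hHg t s
  have hMf0 : 0 ≤ Mf := (abs_nonneg _).trans (hMf 0)
  have hMg0 : 0 ≤ Mg := (abs_nonneg _).trans (hMg 0)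
  -- displacement bound
  have hdisp : ∀ (a : ℝ) p, dist (φ a p) p ≤ MX * |a| := by
    intro a p
    have := Convex.norm_image_sub_le_of_norm_hasDerivWithin_le
      (f := fun τ : ℝ => φ τ p) (f' := fun τ : ℝ => X (φ τ p)) (s := Set.univ)
      (fun τ _ => (hφd τ p).hasDerivWithinAt) (fun τ _ => hXb _) convex_univ
      (Set.mem_univ 0) (Set.mem_univ a)
    simp only [hφ0, sub_zero, Real.norm_eq_abs] at this
    rw [dist_eq_norm]
    exact this
  -- a.e. measurability of flow maps
  have hmeas : ∀ a : ℝ, AEMeasurable (φ a) μ := by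
    intro a
    by_contra h
    have h1 := hμinv a
    rw [Measure.map_of_not_aemeasurable h] at h1
    have h2 : μ Set.univ = 1 := measure_univ
    rw [← h1] at h2
    simp at h2
  have hfc : Continuous f := holder_cont' hα0 hHf
  have hgc : Continuous g := holder_cont' hβ0 hHg
  have hgam : ∀ b : ℝ, AEStronglyMeasurable (fun x => g (φ b x)) μ := fun b =>
    (hgc.measurable.comp_aemeasurable (hmeas b)).aestronglyMeasurable
  have hfam : ∀ b : ℝ, AEStronglyMeasurable (fun x => f (φ b x)) μ := fun b =>
    (hfc.measurable.comp_aemeasurable (hmeas b)).aestronglyMeasurable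
  -- integrability helpers
  have hIb : ∀ b : ℝ, Integrable (fun x => f x * g (φ b x)) μ := by
    intro b
    refine Integrable.mono' (integrable_const (Mf * Mg))
      (hfc.aestronglyMeasurable.mul (hgam b)) (ae_of_all _ fun x => ?_)
    rw [Real.norm_eq_abs, abs_mul]
    exact mul_le_mul (hMf x) (hMg _) (abs_nonneg _) hMf0
  have hIab : ∀ a b : ℝ, Integrable (fun x => f (φ a x) * g (φ b x)) μ := by
    intro a b
    refine Integrable.mono' (integrable_const (Mf * Mg))
      ((hfam a).mul (hgam b)) (ae_of_all _ fun x => ?_)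
    rw [Real.norm_eq_abs, abs_mul]
    exact mul_le_mul (hMf _) (hMg _) (abs_nonneg _) hMf0
  -- invariance of the integral
  have hinv : ∀ (u : ℝ) (F : (Fin d → ℝ) → ℝ), AEStronglyMeasurable F μ →
      ∫ x, F x ∂μ = ∫ x, F (φ u x) ∂μ := by
    intro u F hF
    calc ∫ x, F x ∂μ = ∫ x, F x ∂(μ.map (φ u)) := by rw [hμinv u]
      _ = ∫ x, F (φ u x) ∂μ := integral_map (hmeas u) (by rw [hμinv u]; exact hF)
  -- shift identity
  have hshift : ∀ a b : ℝ, ∫ x, f x * g (φ b x) ∂μ = ∫ x, f (φ a x) * g (φ (b + a) x) ∂μ := by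
    intro a b
    have := hinv a (fun x => f x * g (φ b x)) (hfc.aestronglyMeasurable.mul (hgam b))
    rw [this]
    simp only [← hφg]
  set h : ℝ → ℝ := fun u => ∫ x, f x * g (φ u x) ∂μ with hhdef
  -- the function is bounded
  have hhb : ∀ u : ℝ, |h u| ≤ Mf * Mg := by
    intro u
    have := norm_integral_le_of_norm_le_const (μ := μ)
      (f := fun x => f x * g (φ u x)) (C := Mf * Mg) (ae_of_all _ fun x => by
        rw [Real.norm_eq_abs, abs_mul]
        exact mul_le_mul (hMf x) (hMg _) (abs_nonneg _) hMf0)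
    simpa [hhdef, measure_univ, Real.norm_eq_abs] using this
  -- doubling identity
  have key : ∀ a : ℝ,
      (∫ x, (f x - f (φ a x)) * (g (φ (s + 2*a) x) - g (φ (s + a) x)) ∂μ)
        = h (s + 2*a) - 2 * h (s + a) + h s := by
    intro a
    have e1 : (fun x => (f x - f (φ a x)) * (g (φ (s + 2*a) x) - g (φ (s + a) x)))
        = fun x => (f x * g (φ (s + 2*a) x) - f x * g (φ (s + a) x))
            - (f (φ a x) * g (φ (s + 2*a) x) - f (φ a x) * g (φ (s + a) x)) := by
      funext x; ring
    have I1 : Integrable (fun x => f x * g (φ (s + 2*a) x) - f x * g (φ (s + a) x)) μ :=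
      (hIb _).sub (hIb _)
    have I2 : Integrable
        (fun x => f (φ a x) * g (φ (s + 2*a) x) - f (φ a x) * g (φ (s + a) x)) μ :=
      (hIab _ _).sub (hIab _ _)
    rw [e1, integral_sub I1 I2, integral_sub (hIb _) (hIb _),
      integral_sub (hIab _ _) (hIab _ _)]
    have e2 : ∫ x, f (φ a x) * g (φ (s + 2*a) x) ∂μ = h (s + a) := by
      have h3 := hshift a (s + a)
      rw [show s + a + a = s + 2*a by ring] at h3
      exact h3.symm
    have e3 : ∫ x, f (φ a x) * g (φ (s + a) x) ∂μ = h s := (hshift a s).symm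
    rw [e2, e3]
    simp only [hhdef]
    ring
  -- bound on the error term
  set K : ℝ := Cf * Cg * MX ^ (α + β) with hKdef
  have hK0 : 0 ≤ K := by positivity
  have hE : ∀ a : ℝ,
      |∫ x, (f x - f (φ a x)) * (g (φ (s + 2*a) x) - g (φ (s + a) x)) ∂μ|
        ≤ K * |a| ^ (α + β) := by
    intro a
    have hb : ∀ x, ‖(f x - f (φ a x)) * (g (φ (s + 2*a) x) - g (φ (s + a) x))‖
        ≤ K * |a| ^ (α + β) := by
      intro x
      rw [Real.norm_eq_abs, abs_mul]
      have h1 : |f x - f (φ a x)| ≤ Cf * (MX * |a|) ^ α := by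
        refine (hHf x (φ a x)).trans (mul_le_mul_of_nonneg_left ?_ hCf)
        refine Real.rpow_le_rpow dist_nonneg ?_ hα0.le
        rw [dist_comm]; exact hdisp a x
      have h2 : |g (φ (s + 2*a) x) - g (φ (s + a) x)| ≤ Cg * (MX * |a|) ^ β := by
        refine (hHg _ _).trans (mul_le_mul_of_nonneg_left ?_ hCg)
        refine Real.rpow_le_rpow dist_nonneg ?_ hβ0.le
        have e : φ (s + 2*a) x = φ a (φ (s + a) x) := by
          rw [← hφg]; ring_nf
        rw [e]
        exact hdisp a _
      calc |f x - f (φ a x)| * |g (φ (s + 2*a) x) - g (φ (s + a) x)|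
          ≤ (Cf * (MX * |a|) ^ α) * (Cg * (MX * |a|) ^ β) :=
            mul_le_mul h1 h2 (abs_nonneg _) (by positivity)
        _ = K * |a| ^ (α + β) := by
            rw [hKdef, Real.mul_rpow hMX (abs_nonneg a), Real.mul_rpow hMX (abs_nonneg a),
              Real.rpow_add' hMX (by linarith), Real.rpow_add' (abs_nonneg a) (by linarith)]
            ring
    have h4 := norm_integral_le_of_norm_le_const (μ := μ) (C := K * |a| ^ (α + β))
      (ae_of_all _ hb)
    simpa [measure_univ, Real.norm_eq_abs] using h4
  -- recursion inequality
  have hrec : ∀ a : ℝ, |h (s + a) - h s| ≤ |h (s + 2*a) - h s| / 2 + K * |a| ^ (α + β) / 2 := by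
    intro a
    have hk := key a
    have h2 : |2 * (h (s + a) - h s)| ≤ |h (s + 2*a) - h s| + K * |a| ^ (α + β) := by
      have e : 2 * (h (s + a) - h s) = (h (s + 2*a) - h s)
          - (∫ x, (f x - f (φ a x)) * (g (φ (s + 2*a) x) - g (φ (s + a) x)) ∂μ) := by
        rw [hk]; ring
      rw [e]
      exact (abs_sub _ _).trans (add_le_add le_rfl (hE a))
    rw [abs_mul, abs_two] at h2
    linarith
  -- iterate
  set a : ℝ := t - s with hadef
  have hiter : ∀ n : ℕ, |h (s + a) - h s| ≤ |h (s + 2^n * a) - h s| / 2^n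
      + (K * |a| ^ (α + β) / 2) * ∑ j ∈ Finset.range n, q ^ j := by
    intro n
    induction n with
    | zero => simp
    | succ n ih =>
      have step := hrec ((2:ℝ)^n * a)
      have hpow : |(2:ℝ)^n * a| ^ (α + β) = ((2:ℝ)^n) ^ (α + β) * |a| ^ (α + β) := by
        rw [abs_mul, abs_of_pos (by positivity : (0:ℝ) < (2:ℝ)^n),
          Real.mul_rpow (by positivity) (abs_nonneg a)]
      have hq2 : ((2:ℝ)^n) ^ (α + β) / 2^n = q ^ n := by
        rw [← Real.rpow_natCast (2:ℝ) n, ← Real.rpow_mul (by norm_num),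
          ← Real.rpow_natCast q n, hqdef, ← Real.rpow_mul (by norm_num),
          ← Real.rpow_sub two_pos]
        ring_nf
      have h2n : s + 2 * ((2:ℝ)^n * a) = s + 2^(n+1) * a := by ring
      rw [h2n, hpow] at step
      have h2npos : (0:ℝ) < 2^n := by positivity
      have hdiv : |h (s + 2^n * a) - h s| / 2^n
          ≤ |h (s + 2^(n+1) * a) - h s| / 2^(n+1) + (K * |a| ^ (α + β) / 2) * q ^ n := by
        calc |h (s + 2^n * a) - h s| / 2^n
            ≤ (|h (s + 2^(n+1) * a) - h s| / 2
                + K * (((2:ℝ)^n) ^ (α+β) * |a| ^ (α+β)) / 2) / 2^n :=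
              div_le_div_of_nonneg_right step h2npos.le
          _ = |h (s + 2^(n+1) * a) - h s| / 2^(n+1)
                + (K * |a| ^ (α+β) / 2) * (((2:ℝ)^n) ^ (α+β) / 2^n) := by
              rw [pow_succ]
              field_simp
          _ = |h (s + 2^(n+1) * a) - h s| / 2^(n+1) + (K * |a| ^ (α+β) / 2) * q ^ n := by
              rw [hq2]
      calc |h (s + a) - h s| ≤ |h (s + 2^n * a) - h s| / 2^n
            + (K * |a| ^ (α + β) / 2) * ∑ j ∈ Finset.range n, q ^ j := ih
        _ ≤ |h (s + 2^(n+1) * a) - h s| / 2^(n+1) + (K * |a| ^ (α + β) / 2) * q ^ n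
            + (K * |a| ^ (α + β) / 2) * ∑ j ∈ Finset.range n, q ^ j := by linarith [hdiv]
        _ = |h (s + 2^(n+1) * a) - h s| / 2^(n+1)
            + (K * |a| ^ (α + β) / 2) * ∑ j ∈ Finset.range (n+1), q ^ j := by
              rw [Finset.sum_range_succ]; ring
  -- sum bound
  have hsum : ∀ n : ℕ, ∑ j ∈ Finset.range n, q ^ j ≤ 1 / (1 - q) := by
    intro n
    rw [geom_sum_eq hq1.ne n,
      show q ^ n - 1 = -(1 - q^n) by ring, show q - 1 = -(1 - q) by ring, neg_div_neg_eq]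
    rw [div_le_div_iff₀ h1q h1q]
    nlinarith [pow_nonneg hq0.le n]
  -- pass to the limit
  have hbound : ∀ n : ℕ, |h (s + a) - h s| ≤ 2 * (Mf * Mg) * (1/2:ℝ)^n
      + K * |a| ^ (α + β) / 2 * (1 / (1 - q)) := by
    intro n
    refine (hiter n).trans (add_le_add ?_ ?_)
    · have habs := abs_sub (h (s + 2^n * a)) (h s)
      have hb := add_le_add (hhb (s + 2^n * a)) (hhb s)
      have h2npos : (0:ℝ) < 2^n := by positivity
      rw [div_le_iff₀ h2npos]
      calc |h (s + 2^n * a) - h s| ≤ Mf * Mg + Mf * Mg := habs.trans hb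
        _ = 2 * (Mf * Mg) * (1/2:ℝ)^n * 2^n := by
            rw [div_pow, one_pow]
            field_simp
            ring
    · exact mul_le_mul_of_nonneg_left (hsum n) (by positivity)
  have hlim : Filter.Tendsto (fun n : ℕ => 2 * (Mf * Mg) * (1/2:ℝ)^n
      + K * |a| ^ (α + β) / 2 * (1 / (1 - q))) Filter.atTop
      (nhds (K * |a| ^ (α + β) / 2 * (1 / (1 - q)))) := by
    have h0 : Filter.Tendsto (fun n : ℕ => 2 * (Mf * Mg) * (1/2:ℝ)^n) Filter.atTop
        (nhds 0) := by
      have := (tendsto_pow_atTop_nhds_zero_of_lt_one (by norm_num : (0:ℝ) ≤ 1/2)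
        (by norm_num : (1/2:ℝ) < 1)).const_mul (2 * (Mf * Mg))
      simpa using this
    simpa using h0.add tendsto_const_nhds
  have hfinal : |h (s + a) - h s| ≤ K * |a| ^ (α + β) / 2 * (1 / (1 - q)) :=
    ge_of_tendsto' hlim hbound
  have hta : s + a = t := by rw [hadef]; ring
  rw [hta] at hfinal
  refine hfinal.trans ?_
  have hKC : K ≤ (MX + 1) ^ (α + β) * ((Mf + Cf) * (Mg + Cg)) := by
    have h1 : MX ^ (α + β) ≤ (MX + 1) ^ (α + β) :=
      Real.rpow_le_rpow hMX (by linarith) hαβ0.le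
    have h2 : Cf * Cg ≤ (Mf + Cf) * (Mg + Cg) := by nlinarith
    calc K = Cf * Cg * MX ^ (α + β) := hKdef
      _ ≤ ((Mf + Cf) * (Mg + Cg)) * (MX + 1) ^ (α + β) :=
          mul_le_mul h2 h1 (by positivity) (by positivity)
      _ = (MX + 1) ^ (α + β) * ((Mf + Cf) * (Mg + Cg)) := by ring
  have hrp : (0:ℝ) ≤ |a| ^ (α + β) := by positivity
  calc K * |a| ^ (α + β) / 2 * (1 / (1 - q))
      = K * |a| ^ (α + β) / (2 * (1 - q)) := by
        field_simp
    _ ≤ ((MX + 1) ^ (α + β) * ((Mf + Cf) * (Mg + Cg))) * |a| ^ (α + β) / (2 * (1 - q)) :=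
        div_le_div_of_nonneg_right (mul_le_mul_of_nonneg_right hKC hrp) (by positivity)
    _ = (MX + 1) ^ (α + β) / (2 * (1 - q)) * (Mf + Cf) * (Mg + Cg) * |a| ^ (α + β) := by
        ring
end

section
/- Let α, β ∈ (0,1) with α + β > 1. Let X : ℝ^d → ℝ^d be a bounded continuous vector field, and let φ : ℝ × ℝ^d → ℝ^d be a global flow of X satisfying the group property φ(t + s, p) = φ(t, φ(s, p)). Let μ be a Borel probability measure on ℝ^d invariant under φ(t, ·) for every t. Let f : ℝ^d → ℝ be bounded and α-Hölder with constant C_f, and g : ℝ^d → ℝ be bounded and β-Hölder with constant C_g, and define h(t) = ∫ f(x)·g(φ(t, x)) dμ(x). Then h is differentiable at every t ∈ ℝ and there is a constant C depending only on α and β such that |h′(t)| ≤ C · (sup_x ‖X(x)‖) · (sup|f| + C_f) · (sup|g| + C_g) for all t ∈ ℝ. -/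
/-!
Put `a(s) = h(t + s) - h(t)`. Invariance of `μ` under `φ_{t+u}` and `φ_t` gives
`a(u + v) - a(u) - a(v) = ∫ (f ∘ φ_{-t-u} - f ∘ φ_{-t}) (g ∘ φ_v - g) dμ`, and since `φ` moves
points at speed at most `sup ‖X‖`, the Hölder bounds make this `O(|u|^α |v|^β)`. Because
`α + β > 1`, the dyadic limits `ℓ(s) = lim 2ⁿ a(s / 2ⁿ)` exist (Hyers–Ulam), `ℓ` is additive and
continuous, hence `ℓ(s) = L s`, and `|a(s) - L s| = O(|s|^(α+β)) = o(s)`: so `h'(t) = L`.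
Comparing with `|a(s)| = O((sup ‖X‖ · |s|)^β)` at `s = 1 / sup ‖X‖` bounds `L`.
-/

open MeasureTheory Filter Topology

lemma tendsto_abs_rpow_nhds_zero {γ : ℝ} (hγ : 0 < γ) :
    Tendsto (fun s : ℝ ↦ |s| ^ γ) (𝓝 0) (𝓝 0) := by
  simpa [Real.zero_rpow hγ.ne'] using
    (continuous_abs.rpow_const fun _ ↦ Or.inr hγ.le).tendsto (0 : ℝ)

lemma two_lt_two_rpow {γ : ℝ} (hγ : 1 < γ) : 2 < (2 : ℝ) ^ γ := by
  simpa using Real.rpow_lt_rpow_of_exponent_lt one_lt_two hγ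

lemma two_div_two_rpow_lt_one {γ : ℝ} (hγ : 1 < γ) : 2 / (2 : ℝ) ^ γ < 1 :=
  (div_lt_one (by positivity)).2 (two_lt_two_rpow hγ)

section ApproxAdditive

noncomputable def dyadicRescale (a : ℝ → ℝ) (s : ℝ) (n : ℕ) : ℝ := 2 ^ n * a (s / 2 ^ n)

variable {α β K : ℝ} {a : ℝ → ℝ}

lemma abs_dyadicRescale_add_sub_le
    (hadd : ∀ u v, |a (u + v) - a u - a v| ≤ K * |u| ^ α * |v| ^ β) (u v : ℝ) (n : ℕ) :
    |dyadicRescale a (u + v) n - dyadicRescale a u n - dyadicRescale a v n|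
      ≤ K * |u| ^ α * |v| ^ β * (2 / 2 ^ (α + β)) ^ n := by
  have h2n : (0 : ℝ) < 2 ^ n := by positivity
  have hsplit : dyadicRescale a (u + v) n - dyadicRescale a u n - dyadicRescale a v n
      = 2 ^ n * (a (u / 2 ^ n + v / 2 ^ n) - a (u / 2 ^ n) - a (v / 2 ^ n)) := by
    simp only [dyadicRescale, add_div]; ring
  have hscale : (2 / 2 ^ (α + β) : ℝ) ^ n = 2 ^ n / ((2 ^ n) ^ α * (2 ^ n) ^ β) := by
    rw [← Real.rpow_add h2n, div_pow, Real.rpow_pow_comm zero_le_two]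
  calc |dyadicRescale a (u + v) n - dyadicRescale a u n - dyadicRescale a v n|
      ≤ 2 ^ n * (K * |u / 2 ^ n| ^ α * |v / 2 ^ n| ^ β) := by
        rw [hsplit, abs_mul, abs_of_pos h2n]
        exact mul_le_mul_of_nonneg_left (hadd _ _) h2n.le
    _ = K * |u| ^ α * |v| ^ β * (2 / 2 ^ (α + β)) ^ n := by
        rw [hscale, abs_div, abs_div, abs_of_pos h2n, Real.div_rpow (abs_nonneg u) h2n.le,
          Real.div_rpow (abs_nonneg v) h2n.le]
        field_simp

lemma dist_dyadicRescale_succ_le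
    (hadd : ∀ u v, |a (u + v) - a u - a v| ≤ K * |u| ^ α * |v| ^ β) (s : ℝ) (n : ℕ) :
    dist (dyadicRescale a s n) (dyadicRescale a s (n + 1))
      ≤ K * |s / 2| ^ α * |s / 2| ^ β * (2 / 2 ^ (α + β)) ^ n := by
  have hsucc : dyadicRescale a s (n + 1) = 2 * dyadicRescale a (s / 2) n := by
    rw [dyadicRescale, dyadicRescale, pow_succ', div_div, mul_assoc]
  have h := abs_dyadicRescale_add_sub_le hadd (s / 2) (s / 2) n
  rw [add_halves] at h
  rw [Real.dist_eq, hsucc]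
  convert h using 2
  ring

lemma exists_tendsto_dyadicRescale (hαβ : 1 < α + β)
    (hadd : ∀ u v, |a (u + v) - a u - a v| ≤ K * |u| ^ α * |v| ^ β) (s : ℝ) :
    ∃ l, Tendsto (dyadicRescale a s) atTop (𝓝 l) ∧
      |a s - l| ≤ (2 ^ (α + β) - 2)⁻¹ * K * |s| ^ (α + β) := by
  have hr := two_div_two_rpow_lt_one hαβ
  have hstep := dist_dyadicRescale_succ_le hadd s
  obtain ⟨l, hl⟩ := cauchySeq_tendsto_of_complete (cauchySeq_of_le_geometric _ _ hr hstep)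
  refine ⟨l, hl, ?_⟩
  have h := dist_le_of_le_geometric_of_tendsto₀ _ _ hr hstep hl
  rw [Real.dist_eq] at h
  simp only [dyadicRescale, pow_zero, div_one, one_mul] at h
  refine h.trans_eq ?_
  rw [mul_assoc K, ← Real.rpow_add' (abs_nonneg _) (by linarith), abs_div, abs_two,
    Real.div_rpow (abs_nonneg s) zero_le_two]
  field_simp

lemma exists_abs_sub_mul_le_of_abs_add_sub_le (hα : 0 < α) (hβ : 0 < β) (hαβ : 1 < α + β)
    (hadd : ∀ u v, |a (u + v) - a u - a v| ≤ K * |u| ^ α * |v| ^ β)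
    (ha : Tendsto a (𝓝 0) (𝓝 0)) :
    ∃ L, ∀ s, |a s - L * s| ≤ (2 ^ (α + β) - 2)⁻¹ * K * |s| ^ (α + β) := by
  choose ℓ hℓ hℓa using exists_tendsto_dyadicRescale hαβ hadd
  have hℓ_add : ∀ u v, ℓ (u + v) = ℓ u + ℓ v := by
    intro u v
    have hdefect : Tendsto (fun n ↦ dyadicRescale a (u + v) n - dyadicRescale a u n -
        dyadicRescale a v n) atTop (𝓝 0) := by
      refine squeeze_zero_norm (abs_dyadicRescale_add_sub_le hadd u v) ?_
      simpa using (tendsto_pow_atTop_nhds_zero_of_lt_one (by positivity)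
        (two_div_two_rpow_lt_one hαβ)).const_mul (K * |u| ^ α * |v| ^ β)
    have := tendsto_nhds_unique (((hℓ (u + v)).sub (hℓ u)).sub (hℓ v)) hdefect
    linarith
  let ℓhom : ℝ →+ ℝ := AddMonoidHom.mk' ℓ hℓ_add
  have hℓ_zero : Tendsto ℓ (𝓝 0) (𝓝 0) := by
    have hbound : ∀ s, ‖ℓ s‖ ≤ |a s| + (2 ^ (α + β) - 2)⁻¹ * K * |s| ^ (α + β) := fun s ↦ by
      have := hℓa s
      rw [Real.norm_eq_abs]
      linarith [abs_sub_abs_le_abs_sub (ℓ s) (a s), abs_sub_comm (a s) (ℓ s)]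
    refine squeeze_zero_norm hbound ?_
    simpa using ha.abs.add ((tendsto_abs_rpow_nhds_zero (by linarith)).const_mul _)
  have hℓ_cont : Continuous ℓhom :=
    continuous_of_continuousAt_zero ℓhom (by rw [ContinuousAt, map_zero]; exact hℓ_zero)
  refine ⟨ℓ 1, fun s ↦ ?_⟩
  have hlin : ℓ s = ℓ 1 * s := by
    simpa [ℓhom, mul_comm] using map_real_smul ℓhom hℓ_cont s 1
  rw [← hlin]
  exact hℓa s

end ApproxAdditive

lemma hasDerivAt_of_abs_sub_sub_mul_le {F : ℝ → ℝ} {t L C γ : ℝ} (hγ : 1 < γ)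
    (h : ∀ s, |F (t + s) - F t - L * s| ≤ C * |s| ^ γ) : HasDerivAt F L t := by
  rw [hasDerivAt_iff_isLittleO_nhds_zero]
  have hsmall : (fun s : ℝ ↦ |s| ^ (γ - 1) * s) =o[𝓝 0] fun s ↦ (1 : ℝ) * s :=
    (Asymptotics.isLittleO_one_iff ℝ |>.2 (tendsto_abs_rpow_nhds_zero (sub_pos.2 hγ))).mul_isBigO
      (Asymptotics.isBigO_refl _ _)
  simp only [one_mul] at hsmall
  refine (Asymptotics.IsBigO.of_bound C (Eventually.of_forall fun s ↦ ?_)).trans_isLittleO hsmall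
  have hpow : ‖|s| ^ (γ - 1) * s‖ = |s| ^ γ := by
    rw [norm_mul, Real.norm_eq_abs, Real.norm_eq_abs,
      abs_of_nonneg (Real.rpow_nonneg (abs_nonneg s) _),
      ← Real.rpow_add_one' (abs_nonneg s) (by linarith), sub_add_cancel]
  rw [hpow, Real.norm_eq_abs, smul_eq_mul, mul_comm s L]
  exact h s

lemma continuousAt_of_abs_sub_le_mul_rpow {F : ℝ → ℝ} {t C γ : ℝ} (hγ : 0 < γ)
    (h : ∀ s, |F (t + s) - F t| ≤ C * |s| ^ γ) : ContinuousAt F t := by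
  have hshift : Tendsto (fun s ↦ F (t + s)) (𝓝 0) (𝓝 (F t)) :=
    tendsto_iff_norm_sub_tendsto_zero.2 <| squeeze_zero_norm (fun s ↦ by simpa using h s) <| by
      simpa using (tendsto_abs_rpow_nhds_zero hγ).const_mul C
  simpa [ContinuousAt, Function.comp_def] using
    hshift.comp (tendsto_sub_nhds_zero_iff.2 (tendsto_id (x := 𝓝 t)))

lemma exists_hasDerivAt_of_abs_second_diff_le {F : ℝ → ℝ} {t α β K : ℝ} (hα : 0 < α)
    (hβ : 0 < β) (hαβ : 1 < α + β) (hF : ContinuousAt F t)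
    (h2 : ∀ u v, |F (t + u + v) - F (t + u) - F (t + v) + F t| ≤ K * |u| ^ α * |v| ^ β) :
    ∃ L, HasDerivAt F L t ∧
      ∀ s, |F (t + s) - F t - L * s| ≤ (2 ^ (α + β) - 2)⁻¹ * K * |s| ^ (α + β) := by
  have hadd : ∀ u v, |(F (t + (u + v)) - F t) - (F (t + u) - F t) - (F (t + v) - F t)|
      ≤ K * |u| ^ α * |v| ^ β := fun u v ↦ by
    rw [← add_assoc]; convert h2 u v using 2; ring
  have hcont : Tendsto (fun s ↦ F (t + s) - F t) (𝓝 0) (𝓝 0) := by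
    refine tendsto_sub_nhds_zero_iff.2 (hF.tendsto.comp ?_)
    simpa using (continuous_const_add t).tendsto 0
  obtain ⟨L, hL⟩ := exists_abs_sub_mul_le_of_abs_add_sub_le hα hβ hαβ hadd hcont
  exact ⟨L, hasDerivAt_of_abs_sub_sub_mul_le hαβ hL, hL⟩

lemma abs_le_mul_of_abs_sub_mul_le {a : ℝ → ℝ} {L A B M β γ : ℝ} (hM : 0 ≤ M) (hβ : 0 < β)
    (hγ : 0 < γ) (ha : ∀ s, |a s| ≤ A * (M * |s|) ^ β)
    (hL : ∀ s, |a s - L * s| ≤ B * (M * |s|) ^ γ) : |L| ≤ (A + B) * M := by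
  have htri : ∀ s, |L * s| ≤ |a s| + |a s - L * s| := fun s ↦ by
    simpa using abs_sub (a s) (a s - L * s)
  rcases hM.eq_or_lt with rfl | hM
  · have h1 := htri 1
    have h2 := ha 1
    have h3 := hL 1
    simp only [zero_mul, Real.zero_rpow hβ.ne', Real.zero_rpow hγ.ne', mul_zero, mul_one]
      at h1 h2 h3
    simp only [mul_zero]
    linarith
  · have hs : M * |M⁻¹| = 1 := by rw [abs_of_pos (inv_pos.2 hM), mul_inv_cancel₀ hM.ne']
    have h1 := htri M⁻¹
    have h2 := ha M⁻¹
    have h3 := hL M⁻¹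
    rw [hs, Real.one_rpow, mul_one] at h2 h3
    rw [abs_mul, abs_of_pos (inv_pos.2 hM), ← div_eq_mul_inv] at h1
    exact (div_le_iff₀ hM).1 (by linarith)

structure IsInvariantFlow {E : Type*} [MeasurableSpace E] (φ : ℝ → E → E) (μ : Measure E) :
    Prop where
  zero : ∀ p, φ 0 p = p
  add : ∀ t s p, φ (t + s) p = φ t (φ s p)
  map_eq : ∀ t, μ.map (φ t) = μ

noncomputable def correlation {E : Type*} [MeasurableSpace E] (μ : Measure E) (φ : ℝ → E → E)
    (f g : E → ℝ) (t : ℝ) : ℝ :=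
  ∫ x, f x * g (φ t x) ∂μ

section Invariance

variable {E : Type*} [MeasurableSpace E] {μ : Measure E} {φ : ℝ → E → E} {f g : E → ℝ}

lemma aemeasurable_of_map_eq_self [NeZero μ] {T : E → E} (hT : μ.map T = μ) :
    AEMeasurable T μ :=
  aemeasurable_of_map_neZero (by rw [hT]; infer_instance)

lemma integral_comp_of_map_eq_self [NeZero μ] {T : E → E} (hT : μ.map T = μ) {F : E → ℝ}
    (hF : AEStronglyMeasurable F μ) : ∫ x, F (T x) ∂μ = ∫ x, F x ∂μ := by
  conv_rhs => rw [← hT]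
  exact (integral_map (aemeasurable_of_map_eq_self hT) (hT.symm ▸ hF)).symm

lemma IsInvariantFlow.aestronglyMeasurable_comp_mul_comp [NeZero μ] (hφ : IsInvariantFlow φ μ)
    (hf : Measurable f) (hg : Measurable g) (a b : ℝ) :
    AEStronglyMeasurable (fun x ↦ f (φ a x) * g (φ b x)) μ :=
  ((hf.comp_aemeasurable (aemeasurable_of_map_eq_self (hφ.map_eq a))).mul
    (hg.comp_aemeasurable (aemeasurable_of_map_eq_self (hφ.map_eq b)))).aestronglyMeasurable

lemma IsInvariantFlow.integrable_comp_mul_comp [IsFiniteMeasure μ] [NeZero μ]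
    (hφ : IsInvariantFlow φ μ) (hf : Measurable f) (hg : Measurable g) {Mf Mg : ℝ}
    (hMf : ∀ x, |f x| ≤ Mf) (hMg : ∀ x, |g x| ≤ Mg) (a b : ℝ) :
    Integrable (fun x ↦ f (φ a x) * g (φ b x)) μ :=
  .of_bound (hφ.aestronglyMeasurable_comp_mul_comp hf hg a b) (Mf * Mg) <| .of_forall fun x ↦ by
    rw [Real.norm_eq_abs, abs_mul]
    exact mul_le_mul (hMf _) (hMg _) (abs_nonneg _) ((abs_nonneg (f x)).trans (hMf x))

lemma IsInvariantFlow.correlation_add [NeZero μ] (hφ : IsInvariantFlow φ μ) (hf : Measurable f)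
    (hg : Measurable g) (s v : ℝ) :
    correlation μ φ f g (s + v) = ∫ x, f (φ (-s) x) * g (φ v x) ∂μ := by
  rw [← integral_comp_of_map_eq_self (hφ.map_eq s)
    (hφ.aestronglyMeasurable_comp_mul_comp hf hg (-s) v)]
  refine integral_congr_ae (.of_forall fun x ↦ ?_)
  simp only [← hφ.add, neg_add_cancel, hφ.zero, add_comm v s]

lemma IsInvariantFlow.correlation_second_diff [IsFiniteMeasure μ] [NeZero μ]
    (hφ : IsInvariantFlow φ μ) (hf : Measurable f) (hg : Measurable g) {Mf Mg : ℝ}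
    (hMf : ∀ x, |f x| ≤ Mf) (hMg : ∀ x, |g x| ≤ Mg) (t u v : ℝ) :
    correlation μ φ f g (t + u + v) - correlation μ φ f g (t + u) - correlation μ φ f g (t + v)
        + correlation μ φ f g t
      = ∫ x, (f (φ (-(t + u)) x) - f (φ (-t) x)) * (g (φ v x) - g (φ 0 x)) ∂μ := by
  have hint := hφ.integrable_comp_mul_comp hf hg hMf hMg
  rw [← add_zero (t + u), ← add_zero t, hφ.correlation_add hf hg, hφ.correlation_add hf hg,
    hφ.correlation_add hf hg, hφ.correlation_add hf hg, add_zero, add_zero, sub_add,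
    ← integral_sub (hint _ _) (hint _ _), ← integral_sub (hint _ _) (hint _ _), ← integral_sub]
  · exact integral_congr_ae (.of_forall fun x ↦ by ring)
  · exact (hint _ _).sub (hint _ _)
  · exact (hint _ _).sub (hint _ _)

lemma IsInvariantFlow.correlation_add_sub [IsFiniteMeasure μ] [NeZero μ]
    (hφ : IsInvariantFlow φ μ) (hf : Measurable f) (hg : Measurable g) {Mf Mg : ℝ}
    (hMf : ∀ x, |f x| ≤ Mf) (hMg : ∀ x, |g x| ≤ Mg) (t s : ℝ) :
    correlation μ φ f g (t + s) - correlation μ φ f g t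
      = ∫ x, f (φ (-t) x) * (g (φ s x) - g (φ 0 x)) ∂μ := by
  have hint := hφ.integrable_comp_mul_comp hf hg hMf hMg
  conv_lhs => rw [← add_zero t]
  rw [hφ.correlation_add hf hg, hφ.correlation_add hf hg, ← integral_sub (hint _ _) (hint _ _)]
  simp only [add_zero, mul_sub]

end Invariance

lemma dist_le_mul_abs_sub_of_hasDerivAt {F : Type*} [NormedAddCommGroup F] [NormedSpace ℝ F]
    {X : F → F} {φ : ℝ → F → F} {M : ℝ} (hφ : ∀ t p, HasDerivAt (fun s ↦ φ s p) (X (φ t p)) t)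
    (hX : ∀ x, ‖X x‖ ≤ M) (p : F) (u v : ℝ) : dist (φ u p) (φ v p) ≤ M * |u - v| := by
  simpa [dist_eq_norm, Real.norm_eq_abs] using
    Convex.norm_image_sub_le_of_norm_hasDerivWithin_le (fun t _ ↦ (hφ t p).hasDerivWithinAt)
      (fun t _ ↦ hX (φ t p)) convex_univ (Set.mem_univ v) (Set.mem_univ u)

lemma continuous_of_abs_sub_le_mul_dist_rpow {E : Type*} [PseudoMetricSpace E] {f : E → ℝ}
    {C γ : ℝ} (hγ : 0 < γ) (hf : ∀ x y, |f x - f y| ≤ C * dist x y ^ γ) : Continuous f := by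
  refine continuous_iff_continuousAt.2 fun x ↦ tendsto_iff_dist_tendsto_zero.2 ?_
  refine squeeze_zero (fun _ ↦ dist_nonneg) (fun y ↦ hf y x) ?_
  simpa [Real.zero_rpow hγ.ne'] using
    (((continuous_id.dist (continuous_const (y := x))).rpow_const fun _ ↦
      Or.inr hγ.le).tendsto x).const_mul C

lemma abs_sub_comp_le_of_dist_le {E : Type*} [PseudoMetricSpace E] {φ : ℝ → E → E} {f : E → ℝ}
    {M α Cf : ℝ} (hf : ∀ x y, |f x - f y| ≤ Cf * dist x y ^ α) (hCf : 0 ≤ Cf)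
    (hα : 0 ≤ α) (hlip : ∀ p u v, dist (φ u p) (φ v p) ≤ M * |u - v|) (a b : ℝ) (x : E) :
    |f (φ a x) - f (φ b x)| ≤ Cf * (M * |a - b|) ^ α :=
  (hf _ _).trans (mul_le_mul_of_nonneg_left (Real.rpow_le_rpow dist_nonneg (hlip x a b) hα) hCf)

section HolderObservables

variable {E : Type*} [PseudoMetricSpace E] [MeasurableSpace E] {μ : Measure E}
  [IsProbabilityMeasure μ] {φ : ℝ → E → E} {f g : E → ℝ} {M α β Cf Cg Mf Mg : ℝ}

lemma IsInvariantFlow.abs_correlation_add_sub_le (hφ : IsInvariantFlow φ μ)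
    (hlip : ∀ p u v, dist (φ u p) (φ v p) ≤ M * |u - v|) (hfm : Measurable f)
    (hgm : Measurable g) (hg : ∀ x y, |g x - g y| ≤ Cg * dist x y ^ β) (hCg : 0 ≤ Cg)
    (hβ : 0 ≤ β) (hMf : ∀ x, |f x| ≤ Mf) (hMg : ∀ x, |g x| ≤ Mg) (t s : ℝ) :
    |correlation μ φ f g (t + s) - correlation μ φ f g t| ≤ Mf * Cg * (M * |s|) ^ β := by
  rw [hφ.correlation_add_sub hfm hgm hMf hMg]
  have hbound : ∀ x, ‖f (φ (-t) x) * (g (φ s x) - g (φ 0 x))‖ ≤ Mf * Cg * (M * |s|) ^ β :=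
    fun x ↦ by
      rw [Real.norm_eq_abs, abs_mul, mul_assoc]
      exact mul_le_mul (hMf _) (by simpa using abs_sub_comp_le_of_dist_le hg hCg hβ hlip s 0 x)
        (abs_nonneg _) ((abs_nonneg (f x)).trans (hMf x))
  simpa using norm_integral_le_of_norm_le_const (μ := μ) (.of_forall hbound)

lemma IsInvariantFlow.abs_correlation_second_diff_le (hφ : IsInvariantFlow φ μ)
    (hlip : ∀ p u v, dist (φ u p) (φ v p) ≤ M * |u - v|) (hfm : Measurable f)
    (hgm : Measurable g) (hf : ∀ x y, |f x - f y| ≤ Cf * dist x y ^ α)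
    (hg : ∀ x y, |g x - g y| ≤ Cg * dist x y ^ β) (hCf : 0 ≤ Cf) (hCg : 0 ≤ Cg) (hα : 0 ≤ α)
    (hβ : 0 ≤ β) (hMf : ∀ x, |f x| ≤ Mf) (hMg : ∀ x, |g x| ≤ Mg) (t u v : ℝ) :
    |correlation μ φ f g (t + u + v) - correlation μ φ f g (t + u) - correlation μ φ f g (t + v)
        + correlation μ φ f g t| ≤ Cf * (M * |u|) ^ α * (Cg * (M * |v|) ^ β) := by
  rw [hφ.correlation_second_diff hfm hgm hMf hMg]
  have hbound : ∀ x, ‖(f (φ (-(t + u)) x) - f (φ (-t) x)) * (g (φ v x) - g (φ 0 x))‖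
      ≤ Cf * (M * |u|) ^ α * (Cg * (M * |v|) ^ β) := fun x ↦ by
    rw [Real.norm_eq_abs, abs_mul]
    have hfu : |f (φ (-(t + u)) x) - f (φ (-t) x)| ≤ Cf * (M * |u|) ^ α := by
      simpa [abs_sub_comm] using abs_sub_comp_le_of_dist_le hf hCf hα hlip (-(t + u)) (-t) x
    exact mul_le_mul hfu (by simpa using abs_sub_comp_le_of_dist_le hg hCg hβ hlip v 0 x)
      (abs_nonneg _) ((abs_nonneg _).trans hfu)
  simpa using norm_integral_le_of_norm_le_const (μ := μ) (.of_forall hbound)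

theorem IsInvariantFlow.exists_hasDerivAt_correlation [OpensMeasurableSpace E]
    (hφ : IsInvariantFlow φ μ) (hM : 0 ≤ M) (hlip : ∀ p u v, dist (φ u p) (φ v p) ≤ M * |u - v|)
    (hα : 0 < α) (hβ : 0 < β) (hαβ : 1 < α + β) (hf : ∀ x y, |f x - f y| ≤ Cf * dist x y ^ α)
    (hg : ∀ x y, |g x - g y| ≤ Cg * dist x y ^ β) (hCf : 0 ≤ Cf) (hCg : 0 ≤ Cg)
    (hMf : ∀ x, |f x| ≤ Mf) (hMg : ∀ x, |g x| ≤ Mg) (t : ℝ) :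
    ∃ L, HasDerivAt (correlation μ φ f g) L t ∧
      |L| ≤ (Mf * Cg + (2 ^ (α + β) - 2)⁻¹ * (Cf * Cg)) * M := by
  have hfm := (continuous_of_abs_sub_le_mul_dist_rpow hα hf).measurable
  have hgm := (continuous_of_abs_sub_le_mul_dist_rpow hβ hg).measurable
  have h1 := hφ.abs_correlation_add_sub_le hlip hfm hgm hg hCg hβ.le hMf hMg t
  have hcont : ContinuousAt (correlation μ φ f g) t :=
    continuousAt_of_abs_sub_le_mul_rpow hβ fun s ↦ (h1 s).trans_eq <| by
      rw [Real.mul_rpow hM (abs_nonneg s), ← mul_assoc]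
  have h2 : ∀ u v, |correlation μ φ f g (t + u + v) - correlation μ φ f g (t + u)
      - correlation μ φ f g (t + v) + correlation μ φ f g t|
        ≤ Cf * Cg * M ^ (α + β) * |u| ^ α * |v| ^ β := fun u v ↦ by
    refine (hφ.abs_correlation_second_diff_le hlip hfm hgm hf hg hCf hCg hα.le hβ.le hMf hMg
      t u v).trans_eq ?_
    rw [Real.mul_rpow hM (abs_nonneg u), Real.mul_rpow hM (abs_nonneg v),
      Real.rpow_add' hM (by linarith)]
    ring
  obtain ⟨L, hL, hLapprox⟩ := exists_hasDerivAt_of_abs_second_diff_le hα hβ hαβ hcont h2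
  refine ⟨L, hL, abs_le_mul_of_abs_sub_mul_le hM hβ (by linarith : 0 < α + β) h1 fun s ↦ ?_⟩
  refine (hLapprox s).trans_eq ?_
  rw [Real.mul_rpow hM (abs_nonneg s)]
  ring

end HolderObservables

/-- Differentiability of averaged observables along a flow, case `α + β > 1`:
if `f` is `α`-Hölder, `g` is `β`-Hölder and `μ` is invariant under the flow `φ`
of a bounded vector field `X`, then `h(t) = ∫ f(x)·g(φ_t(x)) dμ` is differentiable
everywhere, with `|h′(t)| ≤ C·(sup ‖X‖)·(sup|f| + C_f)·(sup|g| + C_g)`, where `C`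
depends only on `α` and `β`. -/
theorem stmt_19 (α β : ℝ) (hα : α ∈ Set.Ioo (0:ℝ) 1) (hβ : β ∈ Set.Ioo (0:ℝ) 1)
    (hαβ : 1 < α + β) :
    ∃ C : ℝ, 0 < C ∧
      ∀ (d : ℕ) (MX : ℝ) (X : (Fin d → ℝ) → Fin d → ℝ),
        Continuous X → (∀ x, ‖X x‖ ≤ MX) →
      ∀ φ : ℝ → (Fin d → ℝ) → Fin d → ℝ,
        (∀ p, φ 0 p = p) →
        (∀ t p, HasDerivAt (fun s : ℝ => φ s p) (X (φ t p)) t) →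
        (∀ t s p, φ (t + s) p = φ t (φ s p)) →
      ∀ μ : Measure (Fin d → ℝ), IsProbabilityMeasure μ →
        (∀ t, Measure.map (φ t) μ = μ) →
      ∀ (f g : (Fin d → ℝ) → ℝ) (Mf Cf Mg Cg : ℝ), 0 ≤ Cf → 0 ≤ Cg →
        (∀ x, |f x| ≤ Mf) → (∀ x y, |f x - f y| ≤ Cf * dist x y ^ α) →
        (∀ x, |g x| ≤ Mg) → (∀ x y, |g x - g y| ≤ Cg * dist x y ^ β) →
        ∃ h' : ℝ → ℝ,
          ∀ t : ℝ,
            HasDerivAt (fun u => ∫ x, f x * g (φ u x) ∂μ) (h' t) t ∧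
            |h' t| ≤ C * MX * (Mf + Cf) * (Mg + Cg) := by
  set C₀ : ℝ := (2 ^ (α + β) - 2)⁻¹
  have hC₀ : 0 < C₀ := inv_pos.2 (sub_pos.2 (two_lt_two_rpow hαβ))
  refine ⟨1 + C₀, by linarith, ?_⟩
  intro d MX X _ hX φ hφ0 hφX hφadd μ _ hμ f g Mf Cf Mg Cg hCf hCg hMf hf hMg hg
  have hMX : 0 ≤ MX := (norm_nonneg _).trans (hX 0)
  have hMf0 : 0 ≤ Mf := (abs_nonneg _).trans (hMf 0)
  have hMg0 : 0 ≤ Mg := (abs_nonneg _).trans (hMg 0)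
  choose h' hderiv hbound using IsInvariantFlow.exists_hasDerivAt_correlation ⟨hφ0, hφadd, hμ⟩
    hMX (dist_le_mul_abs_sub_of_hasDerivAt hφX hX) hα.1 hβ.1 hαβ hf hg hCf hCg hMf hMg
  refine ⟨h', fun t ↦ ⟨hderiv t, (hbound t).trans ?_⟩⟩
  have hMfCg : Mf * Cg ≤ (Mf + Cf) * (Mg + Cg) := by nlinarith [mul_nonneg hCf hCg]
  have hCfCg : Cf * Cg ≤ (Mf + Cf) * (Mg + Cg) := by nlinarith [mul_nonneg hMf0 hCg]
  have hfg : Mf * Cg + C₀ * (Cf * Cg) ≤ (1 + C₀) * ((Mf + Cf) * (Mg + Cg)) := by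
    nlinarith [mul_le_mul_of_nonneg_left hCfCg hC₀.le]
  calc (Mf * Cg + C₀ * (Cf * Cg)) * MX ≤ (1 + C₀) * ((Mf + Cf) * (Mg + Cg)) * MX :=
        mul_le_mul_of_nonneg_right hfg hMX
    _ = (1 + C₀) * MX * (Mf + Cf) * (Mg + Cg) := by ring
end
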